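/- arXiv:2503.11157 — 3 statements merged into one kernel-verified Lean document; each statement's English description precedes it below -/
import Mathlib

section
/- Let f be a concave function on ℝ that is differentiable in a neighborhood of a closed interval [x₀, x₁]. Then the concave Legendre transform f*(y) := inf_x (x·y − f(x)) is strictly concave on the open interval (f'(x₁), f'(x₀)). -/
/-! For `y` strictly between `f'(x₁)` and `f'(x₀)`, concavity of `f` makes `z ↦ z * y - f z`
decrease up to `x₀` and increase after `x₁`, so it attains its infimum at some `x ∈ [x₀, x₁]`,
where `f'(x) = y`. Hence `f*` touches the affine function `a ↦ x * a - f x` at `y`, and lies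
strictly below it elsewhere, since a second contact point `a` would force `f'(x) = a`. -/

open Set

/-- The (concave) Legendre transform of `f`, as a real-valued function (the infimum is
finite and attained at points where the considered slope is a derivative value of `f`). -/
noncomputable def concaveLegendre (f : ℝ → ℝ) (y : ℝ) : ℝ :=
  sInf (Set.range fun x => x * y - f x)

theorem strictConcaveOn_of_forall_exists_affine_lt {s : Set ℝ} {φ : ℝ → ℝ} (hs : Convex ℝ s)
    (h : ∀ y ∈ s, ∃ m c : ℝ, φ y = m * y + c ∧ ∀ a ∈ s, a ≠ y → φ a < m * a + c) :
    StrictConcaveOn ℝ s φ := by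
  refine ⟨hs, fun a ha b hb hab p q hp hq hpq => ?_⟩
  obtain ⟨m, c, hy, hlt⟩ := h (p • a + q • b) (hs ha hb hp.le hq.le hpq)
  have hay : a ≠ p * a + q * b := fun h =>
    hab (mul_left_cancel₀ hq.ne' (by linear_combination h + a * hpq))
  have hby : b ≠ p * a + q * b := fun h =>
    hab (mul_left_cancel₀ hp.ne' (by linear_combination -h - b * hpq))
  calc p • φ a + q • φ b < p * (m * a + c) + q * (m * b + c) := by
        simp only [smul_eq_mul]
        gcongr
        exacts [hlt a ha hay, hlt b hb hby]
    _ = m * (p * a + q * b) + c := by linear_combination c * hpq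
    _ = φ (p • a + q • b) := by rw [hy]; rfl

section

variable {f : ℝ → ℝ} {x y : ℝ}

theorem ConcaveOn.mul_sub_le_mul_sub_of_le_deriv (hf : ConcaveOn ℝ univ f)
    (hd : DifferentiableAt ℝ f x) (hy : y ≤ deriv f x) {z : ℝ} (hz : z ≤ x) :
    x * y - f x ≤ z * y - f z := by
  rcases hz.eq_or_lt with rfl | hz
  · rfl
  have hslope := hf.deriv_le_slope (mem_univ z) (mem_univ x) hz hd
  rw [slope_def_field, le_div_iff₀ (sub_pos.2 hz)] at hslope
  nlinarith

theorem ConcaveOn.mul_sub_le_mul_sub_of_deriv_le (hf : ConcaveOn ℝ univ f)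
    (hd : DifferentiableAt ℝ f x) (hy : deriv f x ≤ y) {z : ℝ} (hz : x ≤ z) :
    x * y - f x ≤ z * y - f z := by
  rcases hz.eq_or_lt with rfl | hz
  · rfl
  have hslope := hf.slope_le_deriv (mem_univ x) (mem_univ z) hz hd
  rw [slope_def_field, div_le_iff₀ (sub_pos.2 hz)] at hslope
  nlinarith

theorem ConcaveOn.exists_mem_Icc_forall_mul_sub_le {x₀ x₁ : ℝ} (hf : ConcaveOn ℝ univ f)
    (hx : x₀ ≤ x₁) (hd₀ : DifferentiableAt ℝ f x₀) (hd₁ : DifferentiableAt ℝ f x₁)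
    (hy₁ : deriv f x₁ ≤ y) (hy₀ : y ≤ deriv f x₀) :
    ∃ x ∈ Icc x₀ x₁, ∀ z, x * y - f x ≤ z * y - f z := by
  have hcont : ContinuousOn (fun z => z * y - f z) (Icc x₀ x₁) :=
    (continuous_id.mul continuous_const |>.sub hf.locallyLipschitz.continuous).continuousOn
  obtain ⟨x, hxI, hmin⟩ := isCompact_Icc.exists_isMinOn (nonempty_Icc.2 hx) hcont
  refine ⟨x, hxI, fun z => ?_⟩
  rcases lt_or_ge z x₀ with hz | hz₀
  · exact (hmin (left_mem_Icc.2 hx)).trans (hf.mul_sub_le_mul_sub_of_le_deriv hd₀ hy₀ hz.le)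
  rcases le_or_gt z x₁ with hz₁ | hz
  · exact hmin ⟨hz₀, hz₁⟩
  · exact (hmin (right_mem_Icc.2 hx)).trans (hf.mul_sub_le_mul_sub_of_deriv_le hd₁ hy₁ hz.le)

theorem eq_deriv_of_forall_mul_sub_le (hd : DifferentiableAt ℝ f x)
    (h : ∀ z, x * y - f x ≤ z * y - f z) : y = deriv f x := by
  have hderiv : HasDerivAt (fun z => z * y - f z) (1 * y - deriv f x) x :=
    ((hasDerivAt_id x).mul_const y).sub hd.hasDerivAt
  have hloc : IsLocalMin (fun z => z * y - f z) x := Filter.Eventually.of_forall h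
  have := hloc.hasDerivAt_eq_zero hderiv
  linarith

theorem concaveLegendre_eq_of_forall_mul_sub_le (h : ∀ z, x * y - f x ≤ z * y - f z) :
    concaveLegendre f y = x * y - f x :=
  IsLeast.csInf_eq ⟨⟨x, rfl⟩, forall_mem_range.2 h⟩

theorem concaveLegendre_lt_of_ne_deriv (hbdd : BddBelow (range fun z => z * y - f z))
    (hd : DifferentiableAt ℝ f x) (hne : y ≠ deriv f x) :
    concaveLegendre f y < x * y - f x := by
  refine (csInf_le hbdd ⟨x, rfl⟩).lt_of_ne fun h => hne (eq_deriv_of_forall_mul_sub_le hd ?_)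
  exact fun z => h.symm.trans_le (csInf_le hbdd ⟨z, rfl⟩)

end

theorem strictConcaveOn_concaveLegendre_of_differentiable_general
    (f : ℝ → ℝ) (x₀ x₁ : ℝ) (hx : x₀ ≤ x₁)
    (hconc : ConcaveOn ℝ Set.univ f)
    (U : Set ℝ) (hIcc : Set.Icc x₀ x₁ ⊆ U)
    (hdiff : ∀ x ∈ U, DifferentiableAt ℝ f x) :
    StrictConcaveOn ℝ (Set.Ioo (deriv f x₁) (deriv f x₀)) (concaveLegendre f) := by
  have hmin : ∀ y ∈ Ioo (deriv f x₁) (deriv f x₀), ∃ x ∈ U, ∀ z, x * y - f x ≤ z * y - f z := by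
    intro y hy
    obtain ⟨x, hxI, hxmin⟩ := hconc.exists_mem_Icc_forall_mul_sub_le hx
      (hdiff x₀ (hIcc (left_mem_Icc.2 hx))) (hdiff x₁ (hIcc (right_mem_Icc.2 hx))) hy.1.le hy.2.le
    exact ⟨x, hIcc hxI, hxmin⟩
  refine strictConcaveOn_of_forall_exists_affine_lt (convex_Ioo _ _) fun y hy => ?_
  obtain ⟨x, hxU, hxy⟩ := hmin y hy
  have hderiv : y = deriv f x := eq_deriv_of_forall_mul_sub_le (hdiff x hxU) hxy
  refine ⟨x, -f x, by rw [concaveLegendre_eq_of_forall_mul_sub_le hxy]; ring, fun a ha hay => ?_⟩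
  obtain ⟨xa, -, hxa⟩ := hmin a ha
  have := concaveLegendre_lt_of_ne_deriv ⟨_, forall_mem_range.2 hxa⟩ (hdiff x hxU) (hderiv ▸ hay)
  linarith

/-- If `f` is concave on `ℝ` and differentiable in a neighborhood of `[x₀, x₁]`, then its
concave Legendre transform `f*(y) = inf_x (x·y − f(x))` is strictly concave on the open
interval `(f'(x₁), f'(x₀))`. -/
theorem strictConcaveOn_concaveLegendre_of_differentiable
    (f : ℝ → ℝ) (x₀ x₁ : ℝ) (hx : x₀ ≤ x₁)
    (hconc : ConcaveOn ℝ Set.univ f)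
    (U : Set ℝ) (hU : IsOpen U) (hIcc : Set.Icc x₀ x₁ ⊆ U)
    (hdiff : ∀ x ∈ U, DifferentiableAt ℝ f x) :
    StrictConcaveOn ℝ (Set.Ioo (deriv f x₁) (deriv f x₀)) (concaveLegendre f) :=
  strictConcaveOn_concaveLegendre_of_differentiable_general f x₀ x₁ hx hconc U hIcc hdiff
end

section
/- Let f : ℝ → [−∞, ∞] with sup f < ∞, and let U be a nonempty bounded open subset of ℝ on which f is finite and upper semicontinuous. Then the set {x ∈ U : f**(x) > f(x)} is open in U, and the concave envelope f** is affine on each connected component of this set. -/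
/-!
The envelope `f**` is the infimum of the affine majorants of `f`, hence concave; it is finite on
`U`, hence continuous there, and upper semicontinuity of `f` makes `{f < f**}` open. On a component
`C` of this set, take at `x₀ ∈ C` the supporting line of least slope. If `f**` fell strictly below
it at some `w > x₀` in `C`, then on the compact `[x₀, w] ⊆ C` the function `f` stays a positive
distance below the line, while beyond `w` concavity bounds `f**` by the chord through `x₀` and `w`,
whose slope is smaller. The line could then be tilted down a little and still majorize `f`,
contradicting minimality. So `f**` is affine on `C ∩ [x₀, ∞)` for every `x₀ ∈ C`, and these lines
all coincide since any two of them agree at two points.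
-/

open Set

/-- The concave (usc) envelope of an extended-real-valued function on `ℝ`: the infimum of
all affine functions lying above `f`.  For `f` bounded above this coincides with the double
concave Legendre transform `f**`. -/
noncomputable def concaveEnvelope (f : ℝ → EReal) : ℝ → EReal :=
  fun x => ⨅ p : {p : ℝ × ℝ // ∀ z : ℝ, f z ≤ ((p.1 * z + p.2 : ℝ) : EReal)},
    ((p.1.1 * x + p.1.2 : ℝ) : EReal)

open Filter Topology

theorem IsCompact.exists_pos_forall_le_sub {α : Type*} [TopologicalSpace α] {K : Set α}
    (hK : IsCompact K) {g : α → EReal} {h : α → ℝ} (hg : UpperSemicontinuousOn g K)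
    (hh : ContinuousOn h K) (hlt : ∀ z ∈ K, g z < h z) :
    ∃ γ > 0, ∀ z ∈ K, g z ≤ ((h z - γ : ℝ) : EReal) := by
  rcases K.eq_empty_or_nonempty with rfl | hne
  · exact ⟨1, one_pos, by simp⟩
  have hdiff : UpperSemicontinuousOn (fun z => g z - h z) K :=
    hg.add' (continuous_coe_real_ereal.comp_continuousOn hh.neg).upperSemicontinuousOn
      fun z _ => EReal.continuousAt_add (Or.inr (EReal.coe_ne_bot _)) (Or.inr (EReal.coe_ne_top _))
  obtain ⟨z₀, hz₀, hmax⟩ := hdiff.exists_isMaxOn hne hK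
  have hneg : g z₀ - h z₀ < 0 :=
    (EReal.sub_neg (Or.inr (EReal.coe_ne_top _)) (Or.inr (EReal.coe_ne_bot _))).mpr (hlt z₀ hz₀)
  obtain ⟨c, hc, hc0⟩ := EReal.exists_between_coe_real hneg
  refine ⟨-c, neg_pos.mpr (EReal.coe_lt_coe_iff.mp hc0), fun z hz => ?_⟩
  have hlt' := (EReal.sub_lt_iff (Or.inl (EReal.coe_ne_bot _)) (Or.inl (EReal.coe_ne_top _))).mp
    ((hmax hz).trans_lt hc)
  rw [sub_neg_eq_add, add_comm]
  exact_mod_cast hlt'.le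

theorem IsOpen.exists_mem_lt_mem_gt {C : Set ℝ} (hC : IsOpen C) {x : ℝ} (hx : x ∈ C) :
    ∃ a ∈ C, ∃ b ∈ C, a < x ∧ x < b := by
  obtain ⟨l, u, ⟨hl, hu⟩, hsub⟩ := mem_nhds_iff_exists_Ioo_subset.mp (hC.mem_nhds hx)
  obtain ⟨a, hla, hax⟩ := exists_between hl
  obtain ⟨b, hxb, hbu⟩ := exists_between hu
  exact ⟨a, hsub ⟨hla, hax.trans hu⟩, b, hsub ⟨hl.trans hxb, hbu⟩, hax, hxb⟩

/-- A pair `(e, m)` encodes the line `z ↦ e + m * (z - x₀)` through `(x₀, e)` of slope `m`. -/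
def affineMajorants (f : ℝ → EReal) (x₀ : ℝ) : Set (ℝ × ℝ) :=
  {q | ∀ z, f z ≤ ((q.1 + q.2 * (z - x₀) : ℝ) : EReal)}

section

variable {f : ℝ → EReal} {M : ℝ} {C : Set ℝ}

theorem isClosed_affineMajorants (f : ℝ → EReal) (x₀ : ℝ) :
    IsClosed (affineMajorants f x₀) := by
  simp only [affineMajorants, ofPred_forall]
  refine isClosed_iInter fun z => isClosed_le continuous_const ?_
  exact continuous_coe_real_ereal.comp
    (by fun_prop : Continuous fun q : ℝ × ℝ => q.1 + q.2 * (z - x₀))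

theorem le_of_mem_affineMajorants {x₀ v c : ℝ} {q : ℝ × ℝ} (hq : q ∈ affineMajorants f x₀)
    (hv : (c : EReal) ≤ f v) : c ≤ q.1 + q.2 * (v - x₀) :=
  EReal.coe_le_coe_iff.mp (hv.trans (hq v))

theorem le_concaveEnvelope (f : ℝ → EReal) (x : ℝ) : f x ≤ concaveEnvelope f x :=
  le_iInf fun p => p.2 x

theorem concaveEnvelope_le_of_forall_le {m c : ℝ} (h : ∀ z, f z ≤ ((m * z + c : ℝ) : EReal))
    (x : ℝ) : concaveEnvelope f x ≤ ((m * x + c : ℝ) : EReal) :=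
  iInf_le (fun p : {p : ℝ × ℝ // ∀ z : ℝ, f z ≤ ((p.1 * z + p.2 : ℝ) : EReal)} =>
    ((p.1.1 * x + p.1.2 : ℝ) : EReal)) ⟨(m, c), h⟩

theorem concaveEnvelope_le_of_mem_affineMajorants {x₀ : ℝ} {q : ℝ × ℝ}
    (hq : q ∈ affineMajorants f x₀) (x : ℝ) :
    concaveEnvelope f x ≤ ((q.1 + q.2 * (x - x₀) : ℝ) : EReal) := by
  have hp : ∀ z, f z ≤ ((q.2 * z + (q.1 - q.2 * x₀) : ℝ) : EReal) := fun z => by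
    convert hq z using 2; ring
  convert concaveEnvelope_le_of_forall_le hp x using 2
  ring

theorem exists_mem_affineMajorants_lt {x₀ e : ℝ} (h : concaveEnvelope f x₀ < e) :
    ∃ q ∈ affineMajorants f x₀, q.1 < e := by
  obtain ⟨⟨p, hp⟩, hlt⟩ := iInf_lt_iff.mp h
  refine ⟨(p.1 * x₀ + p.2, p.1), fun z => ?_, EReal.coe_lt_coe_iff.mp hlt⟩
  convert hp z using 2; simp only; ring

theorem concaveEnvelope_ne_top (hsup : ∀ x, f x ≤ M) (x : ℝ) : concaveEnvelope f x ≠ ⊤ :=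
  ne_top_of_le_ne_top (EReal.coe_ne_top (0 * x + M))
    (concaveEnvelope_le_of_forall_le (fun z => by simpa using hsup z) x)

theorem concaveEnvelope_ne_bot {x : ℝ} (h : f x ≠ ⊥) : concaveEnvelope f x ≠ ⊥ :=
  fun hbot => h (le_bot_iff.mp (hbot ▸ le_concaveEnvelope f x))

theorem convexCombo_le_concaveEnvelope {u v a b cu cv : ℝ} (ha : 0 ≤ a) (hb : 0 ≤ b)
    (hab : a + b = 1)
    (hu : (cu : EReal) ≤ concaveEnvelope f u) (hv : (cv : EReal) ≤ concaveEnvelope f v) :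
    ((a * cu + b * cv : ℝ) : EReal) ≤ concaveEnvelope f (a * u + b * v) := by
  refine le_iInf fun ⟨p, hp⟩ => ?_
  have hpu := EReal.coe_le_coe_iff.mp (hu.trans (concaveEnvelope_le_of_forall_le hp u))
  have hpv := EReal.coe_le_coe_iff.mp (hv.trans (concaveEnvelope_le_of_forall_le hp v))
  rw [EReal.coe_le_coe_iff]
  have hcomb : p.1 * (a * u + b * v) + p.2 = a * (p.1 * u + p.2) + b * (p.1 * v + p.2) := by
    linear_combination p.2 * hab.symm
  rw [hcomb]
  gcongr

theorem concaveOn_toReal_concaveEnvelope {s : Set ℝ} (hs : Convex ℝ s)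
    (hfin : ∀ x ∈ s, concaveEnvelope f x ≠ ⊤ ∧ concaveEnvelope f x ≠ ⊥) :
    ConcaveOn ℝ s fun x => (concaveEnvelope f x).toReal := by
  refine ⟨hs, fun u hu v hv a b ha hb hab => ?_⟩
  have hcoe : ∀ x ∈ s, (((concaveEnvelope f x).toReal : ℝ) : EReal) = concaveEnvelope f x :=
    fun x hx => EReal.coe_toReal (hfin x hx).1 (hfin x hx).2
  have h := convexCombo_le_concaveEnvelope ha hb hab (hcoe u hu).le (hcoe v hv).le
  have hmem : a * u + b * v ∈ s := hs hu hv ha hb hab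
  simp only [smul_eq_mul]
  rwa [← EReal.coe_le_coe_iff, hcoe _ hmem]

theorem continuousAt_concaveEnvelope {s : Set ℝ} {x : ℝ} (hs : s ∈ 𝓝 x)
    (hfin : ∀ y ∈ s, concaveEnvelope f y ≠ ⊤ ∧ concaveEnvelope f y ≠ ⊥) :
    ContinuousAt (concaveEnvelope f) x := by
  obtain ⟨ε, hε, hball⟩ := Metric.mem_nhds_iff.mp hs
  have hfin' := fun y hy => hfin y (hball hy)
  have hcont := (concaveOn_toReal_concaveEnvelope (convex_ball x ε) hfin').continuousOn
    Metric.isOpen_ball |>.continuousAt (Metric.ball_mem_nhds x hε)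
  refine (continuous_coe_real_ereal.continuousAt.comp hcont).congr ?_
  filter_upwards [Metric.ball_mem_nhds x hε] with y hy
  exact EReal.coe_toReal (hfin' y hy).1 (hfin' y hy).2

theorem concaveEnvelope_le_secant {u w z eu ew : ℝ} (huw : u < w) (hwz : w < z)
    (hu : (eu : EReal) ≤ concaveEnvelope f u) (hw : concaveEnvelope f w ≤ ew) :
    concaveEnvelope f z ≤ ((eu + (ew - eu) / (w - u) * (z - u) : ℝ) : EReal) := by
  by_contra! h
  obtain ⟨c, hc, hcz⟩ := EReal.exists_between_coe_real h
  have hc' := EReal.coe_lt_coe_iff.mp hc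
  have hzu : 0 < z - u := by linarith
  have hwu : 0 < w - u := by linarith
  set a := (z - w) / (z - u)
  set b := (w - u) / (z - u)
  have hb : 0 < b := div_pos hwu hzu
  have hab : a + b = 1 := by simp only [a, b]; field_simp; ring
  have hw' : a * u + b * z = w := by simp only [a, b]; field_simp; ring
  have hcomb := convexCombo_le_concaveEnvelope (div_nonneg (by linarith) hzu.le) hb.le hab hu hcz.le
  rw [hw'] at hcomb
  have hle : a * eu + b * c ≤ ew := EReal.coe_le_coe_iff.mp (hcomb.trans hw)
  have hslope : b * ((ew - eu) / (w - u) * (z - u)) = ew - eu := by simp only [b]; field_simp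
  have heu : a * eu + b * eu = eu := by rw [← add_mul, hab, one_mul]
  nlinarith [mul_lt_mul_of_pos_left hc' hb]

theorem exists_mem_affineMajorants {a x₀ b fa fb e₀ : ℝ} (hax : a < x₀) (hxb : x₀ < b)
    (hfa : (fa : EReal) ≤ f a) (hfb : (fb : EReal) ≤ f b) (he₀ : concaveEnvelope f x₀ = e₀) :
    ∃ m, (e₀, m) ∈ affineMajorants f x₀ := by
  -- Minimize the value at `x₀` over the majorants with value at most `e₀ + 1`: their slopes are
  -- pinned down by `f a` and `f b`, so they form a compact set.
  set K := affineMajorants f x₀ ∩ {q | q.1 ≤ e₀ + 1}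
  have hKsub : K ⊆ Icc e₀ (e₀ + 1) ×ˢ
      Icc ((fb - (e₀ + 1)) / (b - x₀)) ((e₀ + 1 - fa) / (x₀ - a)) := by
    rintro q ⟨hq, hq1 : q.1 ≤ e₀ + 1⟩
    have he : e₀ ≤ q.1 := by
      have := concaveEnvelope_le_of_mem_affineMajorants hq x₀
      rwa [he₀, sub_self, mul_zero, add_zero, EReal.coe_le_coe_iff] at this
    have hqa := le_of_mem_affineMajorants hq hfa
    have hqb := le_of_mem_affineMajorants hq hfb
    refine ⟨⟨he, hq1⟩, ?_, ?_⟩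
    · rw [div_le_iff₀ (by linarith)]; linarith
    · rw [le_div_iff₀ (by linarith)]; linarith [mul_neg q.2 (x₀ - a), neg_sub x₀ a]
  have hK : IsCompact K := (isCompact_Icc.prod isCompact_Icc).of_isClosed_subset
    ((isClosed_affineMajorants f x₀).inter (isClosed_le continuous_fst continuous_const)) hKsub
  have hbelow : ∀ e, e₀ < e → ∃ q ∈ affineMajorants f x₀, q.1 < e := fun e he =>
    exists_mem_affineMajorants_lt (by rw [he₀]; exact_mod_cast he)
  obtain ⟨q₁, hq₁, hq₁lt⟩ := hbelow (e₀ + 1) (lt_add_one e₀)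
  obtain ⟨q, ⟨hq, hq1⟩, hmin⟩ := hK.exists_isMinOn ⟨q₁, hq₁, hq₁lt.le⟩ continuous_fst.continuousOn
  refine ⟨q.2, fun z => (hq z).trans (EReal.coe_le_coe_iff.mpr ?_)⟩
  suffices q.1 ≤ e₀ by linarith
  by_contra! hgt
  obtain ⟨q', hq', hq'lt⟩ := hbelow q.1 hgt
  have : q.1 ≤ q'.1 := hmin ⟨hq', (hq'lt.trans_le hq1).le⟩
  linarith

theorem exists_isLeast_slope_affineMajorants {a x₀ b fa fb e₀ : ℝ} (hax : a < x₀) (hxb : x₀ < b)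
    (hfa : (fa : EReal) ≤ f a) (hfb : (fb : EReal) ≤ f b) (he₀ : concaveEnvelope f x₀ = e₀) :
    ∃ m, IsLeast {m | (e₀, m) ∈ affineMajorants f x₀} m := by
  obtain ⟨m, hm⟩ := exists_mem_affineMajorants hax hxb hfa hfb he₀
  have hclosed : IsClosed {m | (e₀, m) ∈ affineMajorants f x₀} :=
    (isClosed_affineMajorants f x₀).preimage (Continuous.prodMk_right e₀)
  have hbdd : BddBelow {m | (e₀, m) ∈ affineMajorants f x₀} := by
    refine ⟨(fb - e₀) / (b - x₀), fun m hm => ?_⟩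
    rw [div_le_iff₀ (by linarith)]
    linarith [le_of_mem_affineMajorants hm hfb]
  exact ⟨_, hclosed.isLeast_csInf ⟨m, hm⟩ hbdd⟩

theorem concaveEnvelope_eq_of_isLeast_slope {x₀ w e₀ m : ℝ}
    (hm : IsLeast {m | (e₀, m) ∈ affineMajorants f x₀} m)
    (he₀ : (e₀ : EReal) ≤ concaveEnvelope f x₀) (hxw : x₀ ≤ w)
    (husc : UpperSemicontinuousOn f (Icc x₀ w))
    (hlt : ∀ z ∈ Icc x₀ w, f z < concaveEnvelope f z) :
    concaveEnvelope f w = ((e₀ + m * (w - x₀) : ℝ) : EReal) := by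
  refine (concaveEnvelope_le_of_mem_affineMajorants hm.1 w).antisymm (not_lt.mp fun hw => ?_)
  obtain ⟨ew, hew, hewℓ⟩ := EReal.exists_between_coe_real hw
  have hewℓ' : ew < e₀ + m * (w - x₀) := EReal.coe_lt_coe_iff.mp hewℓ
  have hxw' : x₀ < w := by
    refine hxw.lt_of_ne fun h => ?_
    subst h
    have : e₀ < ew := EReal.coe_lt_coe_iff.mp (he₀.trans_lt hew)
    linarith
  obtain ⟨γ, hγ, hgap⟩ := isCompact_Icc.exists_pos_forall_le_sub husc
    (h := fun z => e₀ + m * (z - x₀)) (by fun_prop)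
    fun z hz => (hlt z hz).trans_le (concaveEnvelope_le_of_mem_affineMajorants hm.1 z)
  set s := (ew - e₀) / (w - x₀)
  have hs : s < m := by rw [div_lt_iff₀ (by linarith)]; linarith
  set η := min (γ / (w - x₀)) (m - s)
  have hη : 0 < η := lt_min (div_pos hγ (by linarith)) (by linarith)
  have htilt : (e₀, m - η) ∈ affineMajorants f x₀ := by
    intro z
    rcases le_or_gt z x₀ with hz | hz
    · refine (hm.1 z).trans (EReal.coe_le_coe_iff.mpr ?_)
      nlinarith
    rcases le_or_gt z w with hzw | hzw
    · refine (hgap z ⟨hz.le, hzw⟩).trans (EReal.coe_le_coe_iff.mpr ?_)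
      have : η * (z - x₀) ≤ γ / (w - x₀) * (w - x₀) :=
        mul_le_mul (min_le_left _ _) (by linarith) (by linarith) (div_pos hγ (by linarith)).le
      rw [div_mul_cancel₀ _ (by linarith)] at this
      dsimp only
      linarith
    · refine (le_concaveEnvelope f z).trans ((concaveEnvelope_le_secant hxw' hzw he₀
        hew.le).trans (EReal.coe_le_coe_iff.mpr ?_))
      have : s ≤ m - η := by linarith [min_le_right (γ / (w - x₀)) (m - s)]
      nlinarith
  linarith [hm.2 htilt]

theorem isOpen_setOf_lt_concaveEnvelope {U : Set ℝ} (hsup : ∀ x, f x ≤ M) (hU : IsOpen U)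
    (hfin : ∀ x ∈ U, f x ≠ ⊥) (husc : UpperSemicontinuousOn f U) :
    IsOpen {x ∈ U | f x < concaveEnvelope f x} := by
  refine isOpen_iff_mem_nhds.mpr fun x ⟨hxU, hx⟩ => ?_
  obtain ⟨c, hfc, hcE⟩ := EReal.exists_between_coe_real hx
  have hU' := hU.mem_nhds hxU
  have hf : ∀ᶠ y in 𝓝 x, f y < c := by
    simpa [nhdsWithin_eq_nhds.mpr hU'] using husc x hxU c hfc
  have hE : ∀ᶠ y in 𝓝 x, (c : EReal) < concaveEnvelope f y :=
    (continuousAt_concaveEnvelope hU' fun y hy =>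
      ⟨concaveEnvelope_ne_top hsup y, concaveEnvelope_ne_bot (hfin y hy)⟩).eventually
      (lt_mem_nhds hcE)
  filter_upwards [hU', hf, hE] with y hyU hfy hEy using ⟨hyU, hfy.trans hEy⟩

theorem exists_affine_eq_concaveEnvelope_on_Ici (hC : IsOpen C) (hC' : C.OrdConnected)
    (hsup : ∀ x, f x ≤ M) (hfin : ∀ x ∈ C, f x ≠ ⊥) (husc : UpperSemicontinuousOn f C)
    (hlt : ∀ x ∈ C, f x < concaveEnvelope f x) {x₀ : ℝ} (hx₀ : x₀ ∈ C) :
    ∃ m c : ℝ, ∀ w ∈ C, x₀ ≤ w → concaveEnvelope f w = ((m * w + c : ℝ) : EReal) := by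
  obtain ⟨a, ha, b, hb, hax, hxb⟩ := hC.exists_mem_lt_mem_gt hx₀
  have he₀ : (((concaveEnvelope f x₀).toReal : ℝ) : EReal) = concaveEnvelope f x₀ :=
    EReal.coe_toReal (concaveEnvelope_ne_top hsup x₀) (concaveEnvelope_ne_bot (hfin x₀ hx₀))
  obtain ⟨m, hm⟩ := exists_isLeast_slope_affineMajorants hax hxb
    (EReal.coe_toReal_le (hfin a ha)) (EReal.coe_toReal_le (hfin b hb)) he₀.symm
  refine ⟨m, (concaveEnvelope f x₀).toReal - m * x₀, fun w hw hxw => ?_⟩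
  have hIcc : Icc x₀ w ⊆ C := hC'.out hx₀ hw
  rw [concaveEnvelope_eq_of_isLeast_slope hm he₀.le hxw (husc.mono hIcc) fun z hz =>
    hlt z (hIcc hz)]
  congr 1
  ring

theorem exists_affine_eq_concaveEnvelope (hC : IsOpen C) (hC' : C.OrdConnected)
    (hsup : ∀ x, f x ≤ M) (hfin : ∀ x ∈ C, f x ≠ ⊥) (husc : UpperSemicontinuousOn f C)
    (hlt : ∀ x ∈ C, f x < concaveEnvelope f x) {x : ℝ} (hx : x ∈ C) :
    ∃ m c : ℝ, ∀ z ∈ C, concaveEnvelope f z = ((m * z + c : ℝ) : EReal) := by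
  have hright := fun {y} hy => exists_affine_eq_concaveEnvelope_on_Ici hC hC' hsup hfin husc hlt
    (x₀ := y) hy
  obtain ⟨u, hu, -, -, hux, -⟩ := hC.exists_mem_lt_mem_gt hx
  obtain ⟨m, c, hmc⟩ := hright hu
  refine ⟨m, c, fun z hz => ?_⟩
  have hmin : min z u ∈ C := by rcases min_choice z u with h | h <;> rw [h] <;> assumption
  obtain ⟨m', c', hmc'⟩ := hright hmin
  have hu' : m' * u + c' = m * u + c := EReal.coe_injective <|
    (hmc' u hu (min_le_right z u)).symm.trans (hmc u hu le_rfl)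
  have hx' : m' * x + c' = m * x + c := EReal.coe_injective <|
    (hmc' x hx ((min_le_right z u).trans hux.le)).symm.trans (hmc x hx hux.le)
  have hm : m' = m :=
    mul_right_cancel₀ (sub_ne_zero.mpr hux.ne) (by linear_combination hu' - hx')
  have hc : c' = c := by rw [hm] at hu'; linarith
  rw [hmc' z hz (min_le_left z u), hm, hc]

end

theorem concaveEnvelope_affine_on_gt_set_general
    (f : ℝ → EReal) (M : ℝ) (hsup : ∀ x, f x ≤ (M : EReal))
    (U : Set ℝ) (hUopen : IsOpen U)
    (hfin : ∀ x ∈ U, f x ≠ ⊤ ∧ f x ≠ ⊥)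
    (husc : UpperSemicontinuousOn f U) :
    IsOpen {x ∈ U | f x < concaveEnvelope f x} ∧
      ∀ x ∈ {x ∈ U | f x < concaveEnvelope f x},
        ∃ m c : ℝ, ∀ z ∈ connectedComponentIn {x ∈ U | f x < concaveEnvelope f x} x,
          concaveEnvelope f z = ((m * z + c : ℝ) : EReal) := by
  have hfin' : ∀ x ∈ U, f x ≠ ⊥ := fun x hx => (hfin x hx).2
  have hopen := isOpen_setOf_lt_concaveEnvelope hsup hUopen hfin' husc
  refine ⟨hopen, fun x hx => ?_⟩
  have hCS := connectedComponentIn_subset {x ∈ U | f x < concaveEnvelope f x} x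
  exact exists_affine_eq_concaveEnvelope hopen.connectedComponentIn
    isPreconnected_connectedComponentIn.ordConnected hsup (fun y hy => hfin' y (hCS hy).1)
    (husc.mono fun y hy => (hCS hy).1) (fun y hy => (hCS hy).2) (mem_connectedComponentIn hx)

/-- Let `f : ℝ → [−∞,∞]` be bounded above, and `U` a nonempty bounded open set on which
`f` is finite and upper semicontinuous.  Then `{x ∈ U : f**(x) > f(x)}` is open, and the
concave envelope `f**` is affine on each connected component of this set. -/
theorem concaveEnvelope_affine_on_gt_set
    (f : ℝ → EReal) (M : ℝ) (hsup : ∀ x, f x ≤ (M : EReal))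
    (U : Set ℝ) (hUne : U.Nonempty) (hUopen : IsOpen U) (hUbdd : Bornology.IsBounded U)
    (hfin : ∀ x ∈ U, f x ≠ ⊤ ∧ f x ≠ ⊥)
    (husc : UpperSemicontinuousOn f U) :
    IsOpen {x ∈ U | f x < concaveEnvelope f x} ∧
      ∀ x ∈ {x ∈ U | f x < concaveEnvelope f x},
        ∃ m c : ℝ, ∀ z ∈ connectedComponentIn {x ∈ U | f x < concaveEnvelope f x} x,
          concaveEnvelope f z = ((m * z + c : ℝ) : EReal) :=
  concaveEnvelope_affine_on_gt_set_general f M hsup U hUopen hfin husc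
end

section
/- Let f : ℝ → ℝ be convex and finite on an interval I, and suppose f is differentiable at every point of I with derivative given by a continuous function. If, for a family (μ_β) indexed by β ∈ I, f(β) = inf over a set of the functional β·E(μ) − S(μ) attained uniquely at μ_β with E(μ_β) continuous in β, then f'(β) = E(μ_β) for all β ∈ I. -/
open Set Filter Topology

/-! On `(a, b)` the free energy is the value at the minimizer, `F β = β E(μ β) − S(μ β)`.
Testing the minimality at `β` against `μ β'` and conversely squeezes the difference quotient
`(F β' − F β) / (β' − β)` between `E (μ β')` and `E (μ β)`, so continuity of `β ↦ E (μ β)`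
yields the derivative. -/

theorem sInf_range_eq_of_forall_le {ι α : Type*} [ConditionallyCompleteLattice α]
    {f : ι → α} {i : ι} (h : ∀ j, f i ≤ f j) : sInf (range f) = f i :=
  IsLeast.csInf_eq ⟨mem_range_self i, forall_mem_range.2 h⟩

theorem hasDerivAt_of_sub_squeezed {f g : ℝ → ℝ} {x : ℝ} (hg : ContinuousAt g x)
    (hbounds : ∀ᶠ y in 𝓝 x, (y - x) * g y ≤ f y - f x ∧ f y - f x ≤ (y - x) * g x) :
    HasDerivAt f (g x) x := by
  have hslope : ∀ᶠ y in 𝓝[≠] x, |slope f x y - g x| ≤ |g y - g x| := by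
    filter_upwards [nhdsWithin_le_nhds hbounds, self_mem_nhdsWithin] with y ⟨hlow, hupp⟩ hne
    have hne : y - x ≠ 0 := sub_ne_zero.2 hne
    have hmem : slope f x y ∈ uIcc (g x) (g y) := by
      rw [slope_def_field]
      rcases hne.lt_or_gt with hneg | hpos
      · exact mem_uIcc.2 <| Or.inl
          ⟨(le_div_iff_of_neg hneg).2 (by linarith), (div_le_iff_of_neg hneg).2 (by linarith)⟩
      · exact mem_uIcc.2 <| Or.inr
          ⟨(le_div_iff₀ hpos).2 (by linarith), (div_le_iff₀ hpos).2 (by linarith)⟩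
    exact abs_sub_left_of_mem_uIcc hmem
  have hg' : Tendsto (fun y => |g y - g x|) (𝓝[≠] x) (𝓝 0) := by
    simpa using ((hg.tendsto.sub_const (g x)).abs).mono_left nhdsWithin_le_nhds
  rw [hasDerivAt_iff_tendsto_slope]
  simpa using (squeeze_zero_norm' hslope hg').add_const (g x)

theorem hasDerivAt_freeEnergy_eq_energy_of_minimizer_general
    {M : Type*} (E S : M → ℝ) (a b : ℝ)
    (μ : ℝ → M)
    (F : ℝ → ℝ) (hF : ∀ β, F β = sInf (Set.range fun ν => β * E ν - S ν))
    (hmin : ∀ β ∈ Set.Ioo a b, ∀ ν : M, β * E (μ β) - S (μ β) ≤ β * E ν - S ν)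
    (hcont : ContinuousOn (fun β => E (μ β)) (Set.Ioo a b)) :
    ∀ β ∈ Set.Ioo a b, HasDerivAt F (E (μ β)) β := by
  have hval : ∀ β ∈ Ioo a b, F β = β * E (μ β) - S (μ β) := fun β hβ =>
    (hF β).trans (sInf_range_eq_of_forall_le (hmin β hβ))
  intro β hβ
  have hnhds : Ioo a b ∈ 𝓝 β := isOpen_Ioo.mem_nhds hβ
  refine hasDerivAt_of_sub_squeezed (f := F) (g := fun β => E (μ β))
    (hcont.continuousAt hnhds) ?_
  filter_upwards [hnhds] with β' hβ'
  rw [hval β hβ, hval β' hβ']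
  constructor <;> linarith [hmin β hβ (μ β'), hmin β' hβ' (μ β)]

/-- Envelope theorem for the free energy: let `F(β) = inf_μ (β·E(μ) − S(μ))` be convex and
finite on an open interval `I = (a,b)`, with the infimum attained at a unique `μ β` for
each `β ∈ I`, and suppose that `β ↦ E (μ β)` is continuous on `I`.  Then `F` is
differentiable on `I` with `F'(β) = E (μ β)`. -/
theorem hasDerivAt_freeEnergy_eq_energy_of_minimizer
    {M : Type*} (E S : M → ℝ) (a b : ℝ) (hab : a < b)
    (μ : ℝ → M)
    (F : ℝ → ℝ) (hF : ∀ β, F β = sInf (Set.range fun ν => β * E ν - S ν))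
    (hconv : ConvexOn ℝ (Set.Ioo a b) F)
    (hmin : ∀ β ∈ Set.Ioo a b, ∀ ν : M, β * E (μ β) - S (μ β) ≤ β * E ν - S ν)
    (huniq : ∀ β ∈ Set.Ioo a b, ∀ ν : M,
      β * E ν - S ν = β * E (μ β) - S (μ β) → ν = μ β)
    (hcont : ContinuousOn (fun β => E (μ β)) (Set.Ioo a b)) :
    ∀ β ∈ Set.Ioo a b, HasDerivAt F (E (μ β)) β :=
  hasDerivAt_freeEnergy_eq_energy_of_minimizer_general E S a b μ F hF hmin hcont
end
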